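/- arXiv:2309.01549 — 4 statements merged into one kernel-verified Lean document; each statement's English description precedes it below -/
import Mathlib

section
/- For all h₁, h₂ ∈ H = L²(𝒪;ℝ), the compositions B ∘ h₁ and B ∘ h₂ belong to H, and ⟨B ∘ h₁ − B ∘ h₂, h₁ − h₂⟩_H ≥ (1/γ₁)·‖h₁ − h₂‖_H². -/
open MeasureTheory intervalIntegral
open scoped NNReal

/-!
Since `γ ≥ γ₀ > 0`, the primitive `g` satisfies `g x - g y ≥ γ₀ (x - y)` for `x ≥ y`, so its right
inverse `g⁻¹` is Lipschitz; hence `b = 1 / (γ ∘ g⁻¹)` is continuous with `1/γ₁ ≤ b ≤ 1/γ₀`.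
Its primitive `B` is then `1/γ₀`-Lipschitz with `B 0 = 0`, which maps `L²` into `L²`, and
`(B x - B y)(x - y) ≥ (x - y)² / γ₁` pointwise; integrating gives the inner product bound.
-/

section Primitive

variable {f : ℝ → ℝ}

theorem mul_sub_le_integral_of_le {m x y : ℝ} (hf : Continuous f) (hm : ∀ s, m ≤ f s)
    (hxy : x ≤ y) : m * (y - x) ≤ ∫ s in x..y, f s := by
  simpa [mul_comm] using
    integral_mono_on hxy (intervalIntegrable_const (μ := volume)) (hf.intervalIntegrable x y) fun s _ => hm s

theorem mul_sq_le_primitive_sub_mul_sub {m : ℝ} (hf : Continuous f) (hm : ∀ s, m ≤ f s)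
    (x y : ℝ) : m * (x - y) ^ 2 ≤ ((∫ s in (0 : ℝ)..x, f s) - ∫ s in (0 : ℝ)..y, f s) * (x - y) := by
  rw [integral_interval_sub_left (hf.intervalIntegrable _ _) (hf.intervalIntegrable _ _)]
  rcases le_total y x with h | h
  · nlinarith [mul_sub_le_integral_of_le hf hm h, sub_nonneg.2 h]
  · rw [integral_symm]
    nlinarith [mul_sub_le_integral_of_le hf hm h, sub_nonneg.2 h]

theorem antilipschitzWith_primitive {m : ℝ≥0} (hm : 0 < m) (hf : Continuous f)
    (hmf : ∀ s, (m : ℝ) ≤ f s) : AntilipschitzWith m⁻¹ fun x => ∫ s in (0 : ℝ)..x, f s := by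
  refine AntilipschitzWith.of_le_mul_dist fun x y => ?_
  rw [Real.dist_eq, Real.dist_eq, NNReal.coe_inv, ← div_eq_inv_mul, le_div_iff₀' (NNReal.coe_pos.2 hm)]
  rcases eq_or_ne x y with rfl | hne
  · simp
  have hsq : m * |x - y| * |x - y| ≤
      |(∫ s in (0 : ℝ)..x, f s) - ∫ s in (0 : ℝ)..y, f s| * |x - y| := by
    rw [mul_assoc, abs_mul_abs_self, ← abs_mul, ← sq]
    exact (mul_sq_le_primitive_sub_mul_sub hf hmf x y).trans (le_abs_self _)
  exact le_of_mul_le_mul_right hsq (abs_pos.2 (sub_ne_zero.2 hne))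

theorem lipschitzWith_primitive {C : ℝ≥0} (hf : Continuous f) (hfC : ∀ s, |f s| ≤ C) :
    LipschitzWith C fun x => ∫ s in (0 : ℝ)..x, f s := by
  refine LipschitzWith.of_dist_le_mul fun x y => ?_
  rw [Real.dist_eq, Real.dist_eq, ← Real.norm_eq_abs,
    integral_interval_sub_left (hf.intervalIntegrable _ _) (hf.intervalIntegrable _ _)]
  exact norm_integral_le_of_norm_le_const fun s _ => (Real.norm_eq_abs _).trans_le (hfC s)

end Primitive

theorem L2.mul_norm_sq_le_inner_of_ae_le {α : Type*} [MeasurableSpace α] {μ : Measure α}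
    {m : ℝ} (f g : Lp ℝ 2 μ) (h : ∀ᵐ x ∂μ, m * g x ^ 2 ≤ f x * g x) :
    m * ‖g‖ ^ 2 ≤ inner ℝ f g := by
  rw [← real_inner_self_eq_norm_sq, L2.inner_def, L2.inner_def, ← MeasureTheory.integral_const_mul]
  refine integral_mono_ae ((L2.integrable_inner g g).const_mul m) (L2.integrable_inner f g) ?_
  filter_upwards [h] with x hx
  simpa only [Real.inner_apply, sq] using hx

theorem stmt7_general
    (d : ℕ)
    (𝒪 : Set (EuclideanSpace ℝ (Fin d)))
    (γ : ℝ → ℝ) (γ₀ γ₁ : ℝ)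
    (hγ : ContDiff ℝ 1 γ)
    (hγ₀ : 0 < γ₀)
    (hbound : ∀ r : ℝ, γ₀ ≤ γ r ∧ γ r ≤ γ₁)
    (g ginv : ℝ → ℝ)
    (hg : ∀ r : ℝ, g r = ∫ s in (0:ℝ)..r, γ s)
    (hright : Function.RightInverse ginv g)
    (b B : ℝ → ℝ)
    (hb : ∀ r : ℝ, b r = 1 / γ (ginv r))
    (hB : ∀ r : ℝ, B r = ∫ s in (0:ℝ)..r, b s)
    (h₁ h₂ : Lp ℝ 2 (volume.restrict 𝒪)) :
    MemLp (fun x => B (h₁ x)) 2 (volume.restrict 𝒪) ∧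
    MemLp (fun x => B (h₂ x)) 2 (volume.restrict 𝒪) ∧
    ∀ Bh₁ Bh₂ : Lp ℝ 2 (volume.restrict 𝒪),
      ⇑Bh₁ =ᵐ[volume.restrict 𝒪] (fun x => B (h₁ x)) →
      ⇑Bh₂ =ᵐ[volume.restrict 𝒪] (fun x => B (h₂ x)) →
      (1 / γ₁) * ‖h₁ - h₂‖ ^ 2 ≤ (inner ℝ (Bh₁ - Bh₂) (h₁ - h₂) : ℝ) := by
  have hγc : Continuous γ := hγ.continuous
  have hγpos : ∀ r, 0 < γ r := fun r => hγ₀.trans_le (hbound r).1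
  obtain rfl : g = fun r => ∫ s in (0 : ℝ)..r, γ s := funext hg
  have hginv : Continuous ginv :=
    ((antilipschitzWith_primitive (Real.toNNReal_pos.2 hγ₀) hγc fun s => by
      simpa [hγ₀.le] using (hbound s).1).to_rightInverse hright).continuous
  have hbc : Continuous b := by
    rw [funext hb]
    exact continuous_const.div (hγc.comp hginv) fun r => (hγpos _).ne'
  have hb_ge : ∀ r, 1 / γ₁ ≤ b r := fun r =>
    hb r ▸ one_div_le_one_div_of_le (hγpos _) (hbound _).2
  have hb_abs : ∀ r, |b r| ≤ ((Real.toNNReal γ₀)⁻¹ : ℝ≥0) := fun r => by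
    rw [hb, NNReal.coe_inv, Real.coe_toNNReal _ hγ₀.le, abs_of_pos (one_div_pos.2 (hγpos _)),
      ← one_div]
    exact one_div_le_one_div_of_le hγ₀ (hbound _).1
  obtain rfl : B = fun r => ∫ s in (0 : ℝ)..r, b s := funext hB
  have hmem : ∀ h : Lp ℝ 2 (volume.restrict 𝒪), MemLp (fun x => ∫ s in (0 : ℝ)..h x, b s) 2 _ :=
    fun h => (lipschitzWith_primitive hbc hb_abs).comp_memLp (by simp) (Lp.memLp h)
  refine ⟨hmem h₁, hmem h₂, fun Bh₁ Bh₂ he₁ he₂ => L2.mul_norm_sq_le_inner_of_ae_le _ _ ?_⟩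
  filter_upwards [Lp.coeFn_sub h₁ h₂, Lp.coeFn_sub Bh₁ Bh₂, he₁, he₂] with x hx hBx e₁ e₂
  rw [hx, hBx, Pi.sub_apply, Pi.sub_apply, e₁, e₂]
  exact mul_sq_le_primitive_sub_mul_sub hbc hb_ge _ _

/-- For all `h₁, h₂ ∈ H = L²(𝒪;ℝ)`, the compositions `B ∘ h₁` and `B ∘ h₂`
belong to `H`, and `⟨B∘h₁ − B∘h₂, h₁ − h₂⟩_H ≥ (1/γ₁)·‖h₁ − h₂‖²`. -/
theorem stmt7
    (d : ℕ) (hd : 1 ≤ d)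
    (𝒪 : Set (EuclideanSpace ℝ (Fin d)))
    (h𝒪meas : MeasurableSet 𝒪) (h𝒪bdd : Bornology.IsBounded 𝒪)
    (γ : ℝ → ℝ) (γ₀ γ₁ : ℝ)
    (hγ : ContDiff ℝ 1 γ)
    (hγ₀ : 0 < γ₀)
    (hbound : ∀ r : ℝ, γ₀ ≤ γ r ∧ γ r ≤ γ₁)
    (g ginv : ℝ → ℝ)
    (hg : ∀ r : ℝ, g r = ∫ s in (0:ℝ)..r, γ s)
    (hleft : Function.LeftInverse ginv g)
    (hright : Function.RightInverse ginv g)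
    (b B : ℝ → ℝ)
    (hb : ∀ r : ℝ, b r = 1 / γ (ginv r))
    (hB : ∀ r : ℝ, B r = ∫ s in (0:ℝ)..r, b s)
    (h₁ h₂ : Lp ℝ 2 (volume.restrict 𝒪)) :
    MemLp (fun x => B (h₁ x)) 2 (volume.restrict 𝒪) ∧
    MemLp (fun x => B (h₂ x)) 2 (volume.restrict 𝒪) ∧
    ∀ Bh₁ Bh₂ : Lp ℝ 2 (volume.restrict 𝒪),
      ⇑Bh₁ =ᵐ[volume.restrict 𝒪] (fun x => B (h₁ x)) →
      ⇑Bh₂ =ᵐ[volume.restrict 𝒪] (fun x => B (h₂ x)) →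
      (1 / γ₁) * ‖h₁ - h₂‖ ^ 2 ≤ (inner ℝ (Bh₁ - Bh₂) (h₁ - h₂) : ℝ) :=
  stmt7_general d 𝒪 γ γ₀ γ₁ hγ hγ₀ hbound g ginv hg hright b B hb hB h₁ h₂
end

section
/- The functional Λ : H → ℝ defined by Λ(h) = ∫_𝒪 𝔣(x, h(x)) dx, where 𝔣(x,r) = ∫₀^r f(x,s) ds, is well defined and Fréchet differentiable at every h ∈ H = L²(𝒪;ℝ), with derivative DΛ(h) given by k ↦ ⟨F(h), k⟩_H, where F(h)(x) := f(x, h(x)); moreover the quantitative remainder bound |Λ(h + k) − Λ(h) − ⟨F(h), k⟩_H| ≤ (L_f/2)·‖k‖_H² holds for all h, k ∈ H. -/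
open MeasureTheory intervalIntegral
open scoped NNReal InnerProductSpace Interval

/-!
Since `f x` is `L_f`-Lipschitz, the integrand of
`𝔣(x, a + b) - 𝔣(x, a) - f(x, a) b = ∫_a^{a+b} (f(x, s) - f(x, a)) ds` is at most `L_f |s - a|`,
which integrates to `(L_f/2) b²`. Integrating this pointwise Taylor bound over `𝒪` gives the
quadratic remainder bound, and a remainder that is `O(‖k‖²)` is `o(‖k‖)`. The same bound at `a = 0` dominates `𝔣(x, h(x))` by
`|f(x, 0) h(x)| + (L_f/2) h(x)²`, which is integrable because `f(·, 0)` and `h` are in `L²`.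
-/

theorem abs_intervalIntegral_sub_mul_le_of_lipschitzWith {g : ℝ → ℝ} {K : ℝ≥0}
    (hg : LipschitzWith K g) (a b : ℝ) :
    |(∫ s in a..b, g s) - (b - a) * g a| ≤ K / 2 * (b - a) ^ 2 := by
  have hsplit : (∫ s in a..b, g s) - (b - a) * g a = ∫ s in a..b, (g s - g a) := by
    rw [integral_sub (hg.continuous.intervalIntegrable a b) intervalIntegrable_const,
      intervalIntegral.integral_const, smul_eq_mul]
  calc |(∫ s in a..b, g s) - (b - a) * g a| = ‖∫ s in a..b, (g s - g a)‖ := by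
        rw [hsplit, Real.norm_eq_abs]
    _ ≤ ∫ s in Ι a b, ‖g s - g a‖ := norm_integral_le_integral_norm_uIoc
    _ ≤ ∫ s in Ι a b, (K : ℝ) * |s - a| :=
        setIntegral_mono_on ((hg.continuous.sub continuous_const).norm.integrableOn_uIoc)
          ((continuous_const.mul (continuous_id.sub continuous_const).abs).integrableOn_uIoc)
          measurableSet_uIoc fun s _ => by simpa [← Real.dist_eq] using hg.dist_le_mul s a
    _ = K / 2 * (b - a) ^ 2 := by
        have h := integral_pow_abs_sub_uIoc (a := a) (b := b) (n := 1)
        norm_num [sq_abs] at h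
        rw [MeasureTheory.integral_const_mul, h]
        ring

theorem abs_primitive_add_sub_sub_mul_le_of_lipschitzWith {g : ℝ → ℝ} {K : ℝ≥0}
    (hg : LipschitzWith K g) (a b : ℝ) :
    |(∫ s in (0 : ℝ)..a + b, g s) - (∫ s in (0 : ℝ)..a, g s) - g a * b| ≤ K / 2 * b ^ 2 := by
  rw [integral_interval_sub_left (hg.continuous.intervalIntegrable _ _)
    (hg.continuous.intervalIntegrable _ _), mul_comm]
  simpa using abs_intervalIntegral_sub_mul_le_of_lipschitzWith hg a (a + b)

theorem measurable_intervalIntegral_comp {α : Type*} [MeasurableSpace α] {f : α → ℝ → ℝ}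
    (hf : Measurable (Function.uncurry f)) {u v : α → ℝ} (hu : Measurable u)
    (hv : Measurable v) : Measurable fun x => ∫ s in u x..v x, f x s := by
  have hIoc : ∀ {l r : α → ℝ}, Measurable l → Measurable r →
      Measurable fun x => ∫ s in Set.Ioc (l x) (r x), f x s := by
    intro l r hl hr
    let S : Set (α × ℝ) := {p | l p.1 < p.2 ∧ p.2 ≤ r p.1}
    have hS : MeasurableSet S :=
      (measurableSet_lt (hl.comp measurable_fst) measurable_snd).inter
        (measurableSet_le measurable_snd (hr.comp measurable_fst))
    convert ((hf.indicator hS).stronglyMeasurable.integral_prod_right'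
      (ν := volume)).measurable using 2 with x
    rw [← MeasureTheory.integral_indicator measurableSet_Ioc]
    rfl
  exact (hIoc hu hv).sub (hIoc hv hu)

section Primitive

variable {α : Type*} [MeasurableSpace α] {μ : Measure α} {f : α → ℝ → ℝ} {K : ℝ≥0}

theorem integrable_intervalIntegral_comp (hf : Measurable (Function.uncurry f))
    (hlip : ∀ᵐ x ∂μ, LipschitzWith K (f x)) (hf0 : MemLp (fun x => f x 0) 2 μ)
    {φ : α → ℝ} (hφ : MemLp φ 2 μ) :
    Integrable (fun x => ∫ s in (0 : ℝ)..φ x, f x s) μ := by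
  have hmeas : AEStronglyMeasurable (fun x => ∫ s in (0 : ℝ)..φ x, f x s) μ := by
    have hφm := hφ.1.aemeasurable
    refine (measurable_intervalIntegral_comp hf (u := fun _ => 0) measurable_const
      hφm.measurable_mk).aestronglyMeasurable.congr ?_
    filter_upwards [hφm.ae_eq_mk] with x hx
    rw [hx]
  have hdom : Integrable (fun x => |f x 0 * φ x| + K / 2 * φ x ^ 2) μ :=
    (hf0.integrable_mul hφ).abs.add (hφ.integrable_sq.const_mul _)
  refine hdom.mono' hmeas ?_
  filter_upwards [hlip] with x hx
  have h := abs_intervalIntegral_sub_mul_le_of_lipschitzWith hx 0 (φ x)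
  rw [sub_zero] at h
  rw [Real.norm_eq_abs, mul_comm (f x 0)]
  linarith [abs_sub_abs_le_abs_sub (∫ s in (0 : ℝ)..φ x, f x s) (φ x * f x 0)]

theorem MeasureTheory.L2.real_inner_eq_integral (g k : Lp ℝ 2 μ) :
    ⟪g, k⟫_ℝ = ∫ x, g x * k x ∂μ := by
  simp only [L2.inner_def, Real.inner_apply]

theorem abs_integral_primitive_add_sub_inner_le (hf : Measurable (Function.uncurry f))
    (hlip : ∀ᵐ x ∂μ, LipschitzWith K (f x)) (hf0 : MemLp (fun x => f x 0) 2 μ)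
    (h k Fh : Lp ℝ 2 μ) (hFh : Fh =ᵐ[μ] fun x => f x (h x)) :
    |(∫ x, (∫ s in (0 : ℝ)..(h + k) x, f x s) ∂μ) - (∫ x, (∫ s in (0 : ℝ)..h x, f x s) ∂μ)
      - ⟪Fh, k⟫_ℝ| ≤ K / 2 * ‖k‖ ^ 2 := by
  have hint (φ : Lp ℝ 2 μ) := integrable_intervalIntegral_comp hf hlip hf0 (Lp.memLp φ)
  have hinner : ⟪Fh, k⟫_ℝ = ∫ x, f x (h x) * k x ∂μ := by
    rw [L2.real_inner_eq_integral]
    refine integral_congr_ae ?_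
    filter_upwards [hFh] with x hx
    rw [hx]
  have hnorm : ‖k‖ ^ 2 = ∫ x, k x ^ 2 ∂μ := by
    rw [← real_inner_self_eq_norm_sq, L2.real_inner_eq_integral]
    simp only [sq]
  have hFhk : Integrable (fun x => f x (h x) * k x) μ := by
    refine (L2.integrable_inner (𝕜 := ℝ) Fh k).congr ?_
    filter_upwards [hFh] with x hx
    rw [Real.inner_apply, hx]
  have hpointwise : ∀ᵐ x ∂μ, ‖(∫ s in (0 : ℝ)..(h + k) x, f x s)
      - (∫ s in (0 : ℝ)..h x, f x s) - f x (h x) * k x‖ ≤ K / 2 * k x ^ 2 := by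
    filter_upwards [hlip, Lp.coeFn_add h k] with x hx hadd
    rw [hadd, Pi.add_apply, Real.norm_eq_abs]
    exact abs_primitive_add_sub_sub_mul_le_of_lipschitzWith hx (h x) (k x)
  have hdiff : Integrable (fun x => (∫ s in (0 : ℝ)..(h + k) x, f x s)
      - ∫ s in (0 : ℝ)..h x, f x s) μ := (hint (h + k)).sub (hint h)
  rw [hinner, hnorm, ← integral_sub (hint (h + k)) (hint h), ← integral_sub hdiff hFhk,
    ← MeasureTheory.integral_const_mul]
  exact norm_integral_le_of_norm_le ((Lp.memLp k).integrable_sq.const_mul _) hpointwise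

end Primitive

theorem hasFDerivAt_of_norm_sub_le_mul_sq {𝕜 E F : Type*} [NontriviallyNormedField 𝕜]
    [NormedAddCommGroup E] [NormedSpace 𝕜 E] [NormedAddCommGroup F] [NormedSpace 𝕜 F]
    {Λ : E → F} {L : E →L[𝕜] F} {x : E} {C : ℝ}
    (hC : ∀ k, ‖Λ (x + k) - Λ x - L k‖ ≤ C * ‖k‖ ^ 2) : HasFDerivAt Λ L x := by
  rw [hasFDerivAt_iff_isLittleO_nhds_zero]
  refine (Asymptotics.IsBigO.of_bound C (Filter.Eventually.of_forall fun k => ?_))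
    |>.trans_isLittleO (Asymptotics.isLittleO_norm_pow_id one_lt_two)
  simpa only [norm_pow, norm_norm] using hC k

theorem stmt9_general
    (d : ℕ)
    (𝒪 : Set (EuclideanSpace ℝ (Fin d)))
    (h𝒪meas : MeasurableSet 𝒪) (h𝒪bdd : Bornology.IsBounded 𝒪)
    (f : EuclideanSpace ℝ (Fin d) → ℝ → ℝ)
    (hfmeas : Measurable (Function.uncurry f))
    (Lf M : ℝ) (hLf : 0 ≤ Lf)
    (hlip : ∀ x ∈ 𝒪, ∀ r s : ℝ, |f x r - f x s| ≤ Lf * |r - s|)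
    (hM0 : ∀ x ∈ 𝒪, |f x 0| ≤ M)
    (ff : EuclideanSpace ℝ (Fin d) → ℝ → ℝ)
    (hff : ∀ x r, ff x r = ∫ s in (0:ℝ)..r, f x s)
    (Λ : Lp ℝ 2 (volume.restrict 𝒪) → ℝ)
    (hΛ : ∀ h : Lp ℝ 2 (volume.restrict 𝒪), Λ h = ∫ x, ff x (h x) ∂(volume.restrict 𝒪))
    (h Fh : Lp ℝ 2 (volume.restrict 𝒪))
    (hFh : ⇑Fh =ᵐ[volume.restrict 𝒪] fun x => f x (h x)) :
    Integrable (fun x => ff x (h x)) (volume.restrict 𝒪) ∧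
    HasFDerivAt Λ (innerSL ℝ Fh) h ∧
    ∀ k : Lp ℝ 2 (volume.restrict 𝒪),
      |Λ (h + k) - Λ h - (inner ℝ Fh k : ℝ)| ≤ (Lf / 2) * ‖k‖ ^ 2 := by
  obtain rfl : ff = fun x r => ∫ s in (0:ℝ)..r, f x s := funext₂ hff
  obtain rfl : Λ = fun h => ∫ x, (∫ s in (0:ℝ)..h x, f x s) ∂(volume.restrict 𝒪) := funext hΛ
  have : IsFiniteMeasure (volume.restrict 𝒪) :=
    isFiniteMeasure_restrict.2 h𝒪bdd.measure_lt_top.ne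
  have hlip' : ∀ᵐ x ∂(volume.restrict 𝒪), LipschitzWith Lf.toNNReal (f x) := by
    filter_upwards [ae_restrict_mem h𝒪meas] with x hx
    exact LipschitzWith.of_dist_le_mul fun r s => by
      simpa only [Real.dist_eq, Real.coe_toNNReal _ hLf] using hlip x hx r s
  have hf0 : MemLp (fun x => f x 0) 2 (volume.restrict 𝒪) :=
    .of_bound (hfmeas.comp measurable_prodMk_right).aestronglyMeasurable M <| by
      filter_upwards [ae_restrict_mem h𝒪meas] with x hx using hM0 x hx
  have hrem (k : Lp ℝ 2 (volume.restrict 𝒪)) :=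
    abs_integral_primitive_add_sub_inner_le hfmeas hlip' hf0 h k Fh hFh
  simp only [Real.coe_toNNReal _ hLf] at hrem
  exact ⟨integrable_intervalIntegral_comp hfmeas hlip' hf0 (Lp.memLp h),
    hasFDerivAt_of_norm_sub_le_mul_sq fun k => by simpa using hrem k, hrem⟩

/-- The functional `Λ(h) = ∫_𝒪 𝔣(x, h(x)) dx`, with
`𝔣(x,r) = ∫₀^r f(x,s) ds`, is well defined and Fréchet differentiable at every `h ∈ L²(𝒪;ℝ)`,
with derivative `k ↦ ⟨F(h), k⟩_H` where `F(h)(x) = f(x, h(x))`; moreover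
`|Λ(h + k) − Λ(h) − ⟨F(h), k⟩| ≤ (L_f/2)·‖k‖²` for all `k`. -/
theorem stmt9
    (d : ℕ) (hd : 1 ≤ d)
    (𝒪 : Set (EuclideanSpace ℝ (Fin d)))
    (h𝒪meas : MeasurableSet 𝒪) (h𝒪bdd : Bornology.IsBounded 𝒪)
    (f : EuclideanSpace ℝ (Fin d) → ℝ → ℝ)
    (hfmeas : Measurable (Function.uncurry f))
    (Lf M : ℝ) (hLf : 0 ≤ Lf) (hM : 0 ≤ M)
    (hlip : ∀ x ∈ 𝒪, ∀ r s : ℝ, |f x r - f x s| ≤ Lf * |r - s|)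
    (hM0 : ∀ x ∈ 𝒪, |f x 0| ≤ M)
    (ff : EuclideanSpace ℝ (Fin d) → ℝ → ℝ)
    (hff : ∀ x r, ff x r = ∫ s in (0:ℝ)..r, f x s)
    (Λ : Lp ℝ 2 (volume.restrict 𝒪) → ℝ)
    (hΛ : ∀ h : Lp ℝ 2 (volume.restrict 𝒪), Λ h = ∫ x, ff x (h x) ∂(volume.restrict 𝒪))
    (h Fh : Lp ℝ 2 (volume.restrict 𝒪))
    (hFh : ⇑Fh =ᵐ[volume.restrict 𝒪] fun x => f x (h x)) :
    Integrable (fun x => ff x (h x)) (volume.restrict 𝒪) ∧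
    HasFDerivAt Λ (innerSL ℝ Fh) h ∧
    ∀ k : Lp ℝ 2 (volume.restrict 𝒪),
      |Λ (h + k) - Λ h - (inner ℝ Fh k : ℝ)| ≤ (Lf / 2) * ‖k‖ ^ 2 :=
  stmt9_general d 𝒪 h𝒪meas h𝒪bdd f hfmeas Lf M hLf hlip hM0 ff hff Λ hΛ h Fh hFh
end

section
/- Suppose there exist constants c ≥ 0 and θ ∈ (0,1) such that for every bounded Lipschitz function φ : S → ℝ, every n ∈ ℕ and all x, y ∈ S, |∫ φ d(κⁿ(x)) − ∫ φ d(κⁿ(y))| ≤ c·θⁿ·Lip(φ)·d(x,y). Then κ admits at most one invariant probability measure. -/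
/-! If `μ` is invariant then `∫ φ dμ = ∫ Pⁿφ dμ` for every `n`, where `Pⁿφ x = ∫ φ d(κⁿ x)`.
The contraction makes `Pⁿφ x - Pⁿφ y → 0` for all `x, y`, boundedly, so by dominated
convergence `Pⁿφ y → ∫ φ dμ`. Thus `κⁿ y` converges weakly to every invariant probability
measure, and weak limits are unique. -/

open MeasureTheory ProbabilityTheory

/-- The `n`-fold iterate of a Markov kernel, started at `x`:
`kiter κ 0 x = δ_x` and `kiter κ (n+1) x = (kiter κ n x).bind κ`. -/
noncomputable def kiter {S : Type*} [MeasurableSpace S] (κ : Kernel S S) :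
    ℕ → S → Measure S
  | 0, x => Measure.dirac x
  | (n + 1), x => (kiter κ n x).bind (fun y => κ y)

/-- A probability measure `μ` is invariant for the Markov kernel `κ` if
`∫ κ(x)(A) μ(dx) = μ(A)` for every measurable set `A`. -/
def Invariant {S : Type*} [MeasurableSpace S] (κ : Kernel S S) (μ : Measure S) : Prop :=
  ∀ A : Set S, MeasurableSet A → ∫⁻ x, κ x A ∂μ = μ A


open Filter Topology

theorem kiter_eq_pow {S : Type*} [MeasurableSpace S] (κ : Kernel S S) :
    ∀ n, kiter κ n = ⇑(κ ^ n)
  | 0 => rfl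
  | n + 1 => by
    funext x
    rw [add_comm, Kernel.pow_add, pow_one, Kernel.comp_apply, ← kiter_eq_pow κ n, add_comm]
    rfl

theorem invariant_iff_kernel_invariant {S : Type*} [MeasurableSpace S] (κ : Kernel S S)
    (μ : Measure S) : Invariant κ μ ↔ κ.Invariant μ := by
  rw [Kernel.Invariant, Measure.ext_iff]
  refine forall₂_congr fun A hA ↦ ?_
  rw [Measure.bind_apply hA κ.aemeasurable]

theorem abs_integral_le_of_forall_abs_le {α : Type*} [MeasurableSpace α] {μ : Measure α}
    [IsProbabilityMeasure μ] {φ : α → ℝ} {C : ℝ} (hC : ∀ z, |φ z| ≤ C) :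
    |∫ z, φ z ∂μ| ≤ C := by
  simpa using norm_integral_le_of_norm_le_const (μ := μ)
    (.of_forall fun z ↦ (Real.norm_eq_abs _).trans_le (hC z))

namespace ProbabilityTheory.Kernel

variable {α : Type*} {mα : MeasurableSpace α} {κ : Kernel α α} {μ : Measure α}

instance isMarkovKernel_pow [IsMarkovKernel κ] : ∀ n : ℕ, IsMarkovKernel (κ ^ n)
  | 0 => inferInstanceAs (IsMarkovKernel Kernel.id)
  | n + 1 => by
    have := isMarkovKernel_pow n
    rw [Kernel.pow_add, pow_one]
    infer_instance

theorem Invariant.pow (hκ : κ.Invariant μ) : ∀ n : ℕ, (κ ^ n).Invariant μ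
  | 0 => Measure.bind_dirac
  | n + 1 => by rw [pow_succ]; exact (hκ.pow n).comp hκ

theorem Invariant.integral_integral {E : Type*} [NormedAddCommGroup E] [NormedSpace ℝ E]
    (hκ : κ.Invariant μ) {f : α → E} (hf : Integrable f μ) :
    ∫ x, ∫ y, f y ∂(κ x) ∂μ = ∫ x, f x ∂μ := by
  conv_rhs => rw [← hκ.def, Measure.comp_eq_comp_const_apply]
  rw [integral_comp]
  · simp
  · rwa [← Measure.comp_eq_comp_const_apply, hκ.def]

theorem Invariant.tendsto_integral_pow_apply [IsMarkovKernel κ] [IsProbabilityMeasure μ]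
    (hμ : κ.Invariant μ) {φ : α → ℝ} (hφ : StronglyMeasurable φ) {C : ℝ}
    (hC : ∀ z, |φ z| ≤ C) (y : α)
    (hosc : ∀ x, Tendsto (fun n ↦ ∫ z, φ z ∂(κ ^ n) x - ∫ z, φ z ∂(κ ^ n) y) atTop (𝓝 0)) :
    Tendsto (fun n ↦ ∫ z, φ z ∂(κ ^ n) y) atTop (𝓝 (∫ z, φ z ∂μ)) := by
  set osc := fun n x ↦ ∫ z, φ z ∂(κ ^ n) x - ∫ z, φ z ∂(κ ^ n) y
  have hosc_int : Tendsto (fun n ↦ ∫ x, osc n x ∂μ) atTop (𝓝 (∫ _, (0 : ℝ) ∂μ)) := by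
    refine tendsto_integral_of_dominated_convergence (fun _ ↦ 2 * C)
      (fun n ↦ (hφ.integral_kernel.sub stronglyMeasurable_const).aestronglyMeasurable)
      (integrable_const _) (fun n ↦ .of_forall fun x ↦ ?_) (.of_forall hosc)
    rw [Real.norm_eq_abs, two_mul]
    exact (abs_sub _ _).trans (add_le_add (abs_integral_le_of_forall_abs_le hC)
      (abs_integral_le_of_forall_abs_le hC))
  have hφ_int : Integrable φ μ := .of_bound hφ.aestronglyMeasurable C
    (.of_forall fun z ↦ (Real.norm_eq_abs _).trans_le (hC z))
  have hosc_eq : ∀ n, ∫ x, osc n x ∂μ = ∫ z, φ z ∂μ - ∫ z, φ z ∂(κ ^ n) y := fun n ↦ by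
    have hPφ_int : Integrable (fun x ↦ ∫ z, φ z ∂(κ ^ n) x) μ :=
      .of_bound hφ.integral_kernel.aestronglyMeasurable C
        (.of_forall fun x ↦ (Real.norm_eq_abs _).trans_le (abs_integral_le_of_forall_abs_le hC))
    rw [integral_sub hPφ_int (integrable_const _), (hμ.pow n).integral_integral hφ_int]
    simp
  simpa [hosc_eq] using (tendsto_const_nhds (x := ∫ z, φ z ∂μ)).sub hosc_int

theorem Invariant.tendsto_pow_apply_of_lipschitz_contraction [MetricSpace α] [BorelSpace α]
    [IsMarkovKernel κ] [IsProbabilityMeasure μ] (hμ : κ.Invariant μ) {c θ : ℝ}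
    (hθ₀ : 0 ≤ θ) (hθ₁ : θ < 1)
    (hcontr : ∀ (φ : α → ℝ) (K : NNReal), (∃ Cb : ℝ, ∀ z, |φ z| ≤ Cb) →
      LipschitzWith K φ → ∀ (n : ℕ) (x y : α),
        |(∫ z, φ z ∂(κ ^ n) x) - ∫ z, φ z ∂(κ ^ n) y| ≤ c * θ ^ n * K * dist x y)
    (y : α) :
    Tendsto (β := ProbabilityMeasure α) (fun n ↦ ⟨(κ ^ n) y, inferInstance⟩) atTop
      (𝓝 ⟨μ, ‹_›⟩) := by
  refine tendsto_iff_forall_lipschitz_integral_tendsto.2 ?_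
  rintro φ ⟨C, hC⟩ ⟨K, hK⟩
  have hbdd : ∀ z, |φ z| ≤ |φ y| + C := fun z ↦ by
    have := abs_sub_abs_le_abs_sub (φ z) (φ y)
    rw [← Real.dist_eq] at this
    linarith [hC z y]
  refine hμ.tendsto_integral_pow_apply hK.continuous.stronglyMeasurable hbdd y fun x ↦ ?_
  have hgeom : Tendsto (fun n ↦ c * θ ^ n * K * dist x y) atTop (𝓝 0) := by
    simpa [mul_comm, mul_left_comm, mul_assoc] using
      (tendsto_pow_atTop_nhds_zero_of_lt_one hθ₀ hθ₁).const_mul (c * K * dist x y)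
  exact squeeze_zero_norm (fun n ↦ (Real.norm_eq_abs _).trans_le
    (hcontr φ K ⟨_, hbdd⟩ hK n x y)) hgeom

end ProbabilityTheory.Kernel

theorem stmt10_general
    {S : Type*} [MetricSpace S] [MeasurableSpace S] [BorelSpace S]
    (κ : Kernel S S) [IsMarkovKernel κ]
    (c θ : ℝ) (hθ : θ ∈ Set.Ioo (0 : ℝ) 1)
    (hcontr : ∀ (φ : S → ℝ) (K : NNReal), (∃ Cb : ℝ, ∀ z, |φ z| ≤ Cb) →
      LipschitzWith K φ → ∀ (n : ℕ) (x y : S),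
        |(∫ z, φ z ∂(kiter κ n x)) - ∫ z, φ z ∂(kiter κ n y)| ≤
          c * θ ^ n * K * dist x y) :
    ∀ μ₁ μ₂ : Measure S, IsProbabilityMeasure μ₁ → IsProbabilityMeasure μ₂ →
      Invariant κ μ₁ → Invariant κ μ₂ → μ₁ = μ₂ := by
  intro μ₁ μ₂ _ _ hμ₁ hμ₂
  simp only [kiter_eq_pow] at hcontr
  obtain ⟨y⟩ := nonempty_of_isProbabilityMeasure μ₁
  have hlim := fun μ [IsProbabilityMeasure μ] (hμ : Invariant κ μ) ↦
    ((invariant_iff_kernel_invariant κ μ).1 hμ).tendsto_pow_apply_of_lipschitz_contraction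
      hθ.1.le hθ.2 hcontr y
  exact congrArg ProbabilityMeasure.toMeasure (tendsto_nhds_unique (hlim μ₁ hμ₁) (hlim μ₂ hμ₂))

/-- If there are `c ≥ 0` and `θ ∈ (0,1)` such that for every bounded
Lipschitz `φ`, all `n` and all `x, y`,
`|∫ φ d(κⁿ(x)) − ∫ φ d(κⁿ(y))| ≤ c·θⁿ·Lip(φ)·d(x,y)`, then `κ` admits at most one
invariant probability measure. -/
theorem stmt10
    {S : Type*} [MetricSpace S] [CompleteSpace S] [TopologicalSpace.SeparableSpace S]
    [MeasurableSpace S] [BorelSpace S]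
    (κ : Kernel S S) [IsMarkovKernel κ]
    (c θ : ℝ) (hc : 0 ≤ c) (hθ : θ ∈ Set.Ioo (0 : ℝ) 1)
    (hcontr : ∀ (φ : S → ℝ) (K : NNReal), (∃ Cb : ℝ, ∀ z, |φ z| ≤ Cb) →
      LipschitzWith K φ → ∀ (n : ℕ) (x y : S),
        |(∫ z, φ z ∂(kiter κ n x)) - ∫ z, φ z ∂(kiter κ n y)| ≤
          c * θ ^ n * K * dist x y) :
    ∀ μ₁ μ₂ : Measure S, IsProbabilityMeasure μ₁ → IsProbabilityMeasure μ₂ →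
      Invariant κ μ₁ → Invariant κ μ₂ → μ₁ = μ₂ :=
  stmt10_general κ c θ hθ hcontr
end

section
/- Let κ be a Markov kernel on a measurable space S, let V : S → [0,∞) be measurable, and let c ≥ 0 and θ ∈ [0,1) be constants such that ∫ V(y) κ(x)(dy) ≤ c + θ·V(x) for every x ∈ S. Then every invariant probability measure μ for κ satisfies ∫ V dμ ≤ c/(1 − θ); in particular V is μ-integrable. -/
/-! Invariance turns the drift inequality into `∫ V dμ ≤ c + θ ∫ V dμ`, which gives the bound
once `∫ V dμ` is known to be finite. To get around that, iterate the drift `n` times under the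
truncation `min · N`:
`∫ min V N dμ ≤ ∫ min (c (1 + θ + ⋯ + θ ^ (n - 1)) + θ ^ n V) N dμ`,
let `n → ∞` by dominated convergence, and then `N → ∞` by monotone convergence. -/

open MeasureTheory ProbabilityTheory

open Filter Topology
open scoped ENNReal

theorem lintegral_min_le_min_lintegral {α : Type*} [MeasurableSpace α] {ν : Measure α}
    [IsProbabilityMeasure ν] (f : α → ℝ≥0∞) (N : ℝ≥0∞) :
    ∫⁻ y, min (f y) N ∂ν ≤ min (∫⁻ y, f y ∂ν) N :=
  le_min (lintegral_mono fun _ ↦ min_le_left _ _)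
    ((lintegral_mono fun _ ↦ min_le_right _ _).trans_eq (by simp))

theorem lintegral_eq_iSup_lintegral_min_natCast {α : Type*} [MeasurableSpace α] {μ : Measure α}
    {f : α → ℝ≥0∞} (hf : Measurable f) :
    ∫⁻ x, f x ∂μ = ⨆ n : ℕ, ∫⁻ x, min (f x) n ∂μ := by
  have hsup (x : α) : ⨆ n : ℕ, min (f x) n = f x := by
    rw [← inf_iSup_eq, ENNReal.iSup_natCast, inf_top_eq]
  rw [← lintegral_iSup (fun n ↦ hf.min measurable_const)
    fun m n hmn x ↦ min_le_min_left _ (by exact_mod_cast hmn)]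
  simp_rw [hsup]

theorem ENNReal.tendsto_mul_geom_sum_add_pow_mul {C Θ w : ℝ≥0∞} (hΘ : Θ < 1) (hw : w ≠ ∞) :
    Tendsto (fun n ↦ C * ∑ i ∈ Finset.range n, Θ ^ i + Θ ^ n * w) atTop (𝓝 (C * (1 - Θ)⁻¹)) := by
  have hsum : Tendsto (fun n ↦ ∑ i ∈ Finset.range n, Θ ^ i) atTop (𝓝 (1 - Θ)⁻¹) :=
    ENNReal.tsum_geometric Θ ▸ ENNReal.tendsto_nat_tsum _
  have hpow : Tendsto (fun n ↦ Θ ^ n * w) atTop (𝓝 0) := by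
    simpa using
      ENNReal.Tendsto.mul_const (ENNReal.tendsto_pow_atTop_nhds_zero_of_lt_one hΘ) (Or.inr hw)
  simpa using (ENNReal.Tendsto.const_mul hsum (Or.inl (by simp))).add hpow

namespace Invariant

variable {S : Type*} [MeasurableSpace S] {κ : Kernel S S} {μ : Measure S}

theorem bind_eq (hinv : Invariant κ μ) : μ.bind κ = μ := by
  ext A hA
  rw [Measure.bind_apply hA κ.measurable.aemeasurable]
  exact hinv A hA

theorem lintegral_lintegral (hinv : Invariant κ μ) {f : S → ℝ≥0∞} (hf : Measurable f) :
    ∫⁻ x, ∫⁻ y, f y ∂κ x ∂μ = ∫⁻ x, f x ∂μ := by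
  rw [← Measure.lintegral_bind κ.measurable.aemeasurable hf.aemeasurable, hinv.bind_eq]

theorem lintegral_min_le_lintegral_min_lintegral [IsMarkovKernel κ] (hinv : Invariant κ μ)
    {f : S → ℝ≥0∞} (hf : Measurable f) (N : ℝ≥0∞) :
    ∫⁻ x, min (f x) N ∂μ ≤ ∫⁻ x, min (∫⁻ y, f y ∂κ x) N ∂μ := by
  rw [← hinv.lintegral_lintegral (hf.min measurable_const)]
  exact lintegral_mono fun x ↦ lintegral_min_le_min_lintegral f N

variable [IsMarkovKernel κ] {W : S → ℝ≥0∞} {C Θ : ℝ≥0∞}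

theorem lintegral_min_le_of_drift (hinv : Invariant κ μ) (hW : Measurable W)
    (hdrift : ∀ x, ∫⁻ y, W y ∂κ x ≤ C + Θ * W x) (N : ℝ≥0∞) (n : ℕ) :
    ∫⁻ x, min (W x) N ∂μ ≤
      ∫⁻ x, min (C * ∑ i ∈ Finset.range n, Θ ^ i + Θ ^ n * W x) N ∂μ := by
  induction n with
  | zero => simp
  | succ n ih =>
    refine ih.trans <| (hinv.lintegral_min_le_lintegral_min_lintegral
      (measurable_const.add (hW.const_mul _)) N).trans <| lintegral_mono fun x ↦ ?_
    refine min_le_min_right N ?_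
    calc ∫⁻ y, C * ∑ i ∈ Finset.range n, Θ ^ i + Θ ^ n * W y ∂κ x
        = C * ∑ i ∈ Finset.range n, Θ ^ i + Θ ^ n * ∫⁻ y, W y ∂κ x := by
          rw [lintegral_add_left measurable_const, lintegral_const_mul _ hW, lintegral_const,
            measure_univ, mul_one]
      _ ≤ C * ∑ i ∈ Finset.range n, Θ ^ i + Θ ^ n * (C + Θ * W x) := by
          gcongr; exact hdrift x
      _ = C * ∑ i ∈ Finset.range (n + 1), Θ ^ i + Θ ^ (n + 1) * W x := by
          rw [Finset.sum_range_succ, pow_succ]; ring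

variable [IsProbabilityMeasure μ]

theorem lintegral_le_of_drift (hinv : Invariant κ μ) (hW : Measurable W)
    (hW_ne_top : ∀ x, W x ≠ ∞) (hΘ : Θ < 1) (hdrift : ∀ x, ∫⁻ y, W y ∂κ x ≤ C + Θ * W x) :
    ∫⁻ x, W x ∂μ ≤ C * (1 - Θ)⁻¹ := by
  rw [lintegral_eq_iSup_lintegral_min_natCast hW]
  refine iSup_le fun N ↦ ?_
  have hlim : Tendsto (fun n ↦ ∫⁻ x, min (C * ∑ i ∈ Finset.range n, Θ ^ i + Θ ^ n * W x) N ∂μ)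
      atTop (𝓝 (∫⁻ _, min (C * (1 - Θ)⁻¹) N ∂μ)) :=
    tendsto_lintegral_of_dominated_convergence (fun _ ↦ N)
      (fun n ↦ (measurable_const.add (hW.const_mul _)).min measurable_const)
      (fun n ↦ .of_forall fun x ↦ min_le_right _ _) (by simp)
      (.of_forall fun x ↦
        (ENNReal.tendsto_mul_geom_sum_add_pow_mul hΘ (hW_ne_top x)).min tendsto_const_nhds)
  calc ∫⁻ x, min (W x) N ∂μ ≤ ∫⁻ _, min (C * (1 - Θ)⁻¹) N ∂μ :=
        ge_of_tendsto' hlim (hinv.lintegral_min_le_of_drift hW hdrift N)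
    _ ≤ C * (1 - Θ)⁻¹ := by simp

end Invariant

theorem integrable_and_integral_le_of_lintegral_ofReal_le {α : Type*} [MeasurableSpace α]
    {μ : Measure α} {f : α → ℝ} (hf : AEStronglyMeasurable f μ) (hf0 : 0 ≤ᵐ[μ] f) {b : ℝ}
    (hb : 0 ≤ b) (h : ∫⁻ x, ENNReal.ofReal (f x) ∂μ ≤ ENNReal.ofReal b) :
    Integrable f μ ∧ ∫ x, f x ∂μ ≤ b := by
  refine ⟨(lintegral_ofReal_ne_top_iff_integrable hf hf0).1 (ne_top_of_le_ne_top (by simp) h), ?_⟩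
  rw [integral_eq_lintegral_of_nonneg_ae hf0 hf]
  exact ENNReal.toReal_le_of_le_ofReal hb h

/-- If `V : S → [0,∞)` is measurable and
`∫ V(y) κ(x)(dy) ≤ c + θ·V(x)` for all `x`, with `c ≥ 0` and `θ ∈ [0,1)`, then every
invariant probability measure `μ` for `κ` satisfies `∫ V dμ ≤ c/(1 − θ)`; in particular
`V` is `μ`-integrable. -/
theorem stmt13
    {S : Type*} [MeasurableSpace S]
    (κ : Kernel S S) [IsMarkovKernel κ]
    (V : S → ℝ) (hV0 : ∀ x, 0 ≤ V x) (hVmeas : Measurable V)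
    (c θ : ℝ) (hc : 0 ≤ c) (hθ : θ ∈ Set.Ico (0 : ℝ) 1)
    (hdrift : ∀ x : S,
      ∫⁻ y, ENNReal.ofReal (V y) ∂(κ x) ≤ ENNReal.ofReal (c + θ * V x))
    (μ : Measure S) [IsProbabilityMeasure μ] (hinv : Invariant κ μ) :
    Integrable V μ ∧ ∫ x, V x ∂μ ≤ c / (1 - θ) := by
  obtain ⟨hθ0, hθ1⟩ := hθ
  have hdriftE (x : S) : ∫⁻ y, ENNReal.ofReal (V y) ∂κ x ≤
      ENNReal.ofReal c + ENNReal.ofReal θ * ENNReal.ofReal (V x) := by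
    rw [← ENNReal.ofReal_mul hθ0, ← ENNReal.ofReal_add hc (mul_nonneg hθ0 (hV0 x))]
    exact hdrift x
  have hbound := hinv.lintegral_le_of_drift (ENNReal.measurable_ofReal.comp hVmeas)
    (fun _ ↦ ENNReal.ofReal_ne_top) (ENNReal.ofReal_lt_one.2 hθ1) hdriftE
  have hL : ENNReal.ofReal c * (1 - ENNReal.ofReal θ)⁻¹ = ENNReal.ofReal (c / (1 - θ)) := by
    rw [ENNReal.ofReal_div_of_pos (by linarith), div_eq_mul_inv, ← ENNReal.ofReal_one,
      ← ENNReal.ofReal_sub _ hθ0]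
  exact integrable_and_integral_le_of_lintegral_ofReal_le hVmeas.aestronglyMeasurable
    (.of_forall hV0) (div_nonneg hc (by linarith)) (hL ▸ hbound)
end
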